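/- arXiv:1510.00195 — 2 statements merged into one kernel-verified Lean document; each statement's English description precedes it below -/
import Mathlib

section
/- Let N ≥ 1, let ν_{j,N} = -cos((2j+1)π/(2N+2)) for j = 0, ..., N be the Chebyshev points of the first kind, and let ℓ_{j,N}^ν be the Lagrange basis polynomials associated with these points. Let T_k denote the k-th Chebyshev polynomial of the first kind. Then for every j = 0, ..., N and all real x, ℓ_{j,N}^ν(x) = (1/(N+1))·T_0(x) + Σ_{k=1}^{N-1} (2T_k(ν_{j,N})/(N+1))·T_k(x) + (-1)^{N-j}·(2/(N+1))·sin((2j+1)π/(2N+2))·T_N(x). -/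
/-!
With `θ_i = (2i+1)π/(2N+2)` we have `ν_i = -cos θ_i` and `T_k(ν_i) T_k(ν_j) = cos kθ_i cos kθ_j`.
The product-to-sum formula and the Dirichlet kernel give the discrete orthogonality
`1 + 2 ∑_{k=1}^N cos kθ_i cos kθ_j = (N+1) δ_ij`, so the polynomial
`(1 + 2 ∑_{k=1}^N T_k(ν_j) T_k) / (N+1)`, of degree at most `N`, takes the values `δ_ij` at the
nodes and is therefore `ℓ_j`. Its top coefficient is evaluated by
`T_N(ν_j) = cos (N(π - θ_j)) = (-1)^(N-j) sin θ_j`.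
-/

open Polynomial Polynomial.Chebyshev Real Finset

theorem Polynomial.Chebyshev.T_eval_neg_mul_T_eval_neg {R : Type*} [CommRing R] (n : ℤ)
    (x y : R) : (T R n).eval (-x) * (T R n).eval (-y) = (T R n).eval x * (T R n).eval y := by
  have hsq : ((n.negOnePow : ℤ) : R) * (n.negOnePow : ℤ) = 1 := by
    rw [← Int.cast_mul, ← Units.val_mul, ← Int.negOnePow_add, Int.negOnePow_even _ (by simp)]
    simp
  rw [T_eval_neg, T_eval_neg]
  linear_combination ((T R n).eval x * (T R n).eval y) * hsq

theorem Finset.sum_range_succ_eq_add_sum_Icc {M : Type*} [AddCommMonoid M] (f : ℕ → M) (n : ℕ) :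
    ∑ k ∈ range (n + 1), f k = f 0 + ∑ k ∈ Icc 1 n, f k := by
  rw [range_eq_Ico, sum_eq_sum_Ico_succ_bot n.succ_pos, zero_add, Nat.succ_eq_add_one,
    Ico_add_one_right_eq_Icc]

theorem Real.sum_Icc_cos_mul_pi_div {N m : ℕ} (hm₀ : 0 < m) (hm : m < 2 * N + 2) :
    ∑ k ∈ Icc 1 N, cos (k * (m * π / (N + 1))) = -(1 + (-1) ^ m) / 2 := by
  set a : ℝ := m * π / (N + 1) with ha
  have hsin : sin (a / 2) ≠ 0 := by
    refine (sin_pos_of_pos_of_lt_pi (by positivity) ?_).ne'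
    rw [ha, div_div, div_lt_iff₀ (by positivity)]
    have : (m : ℝ) < 2 * N + 2 := by exact_mod_cast hm
    nlinarith [pi_pos]
  have hdirichlet := sin_mul_sum_cos (N + 1) a 0
  have hangle₁ : ((N + 1 : ℕ) : ℝ) * a / 2 = m * π / 2 := by rw [ha]; push_cast; field_simp
  have hangle₂ : (((N + 1 : ℕ) : ℝ) - 1) * a / 2 + 0 = m * π / 2 - a / 2 := by
    rw [ha]; push_cast; field_simp; ring
  rw [hangle₁, hangle₂, cos_sub, sum_range_succ_eq_add_sum_Icc] at hdirichlet
  simp only [Nat.cast_zero, add_zero, mul_comm a, zero_mul, cos_zero] at hdirichlet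
  have hsc : 2 * sin (m * π / 2) * cos (m * π / 2) = 0 := by
    rw [← sin_two_mul, mul_div_cancel₀ _ two_ne_zero, sin_nat_mul_pi]
  have hcc : 2 * cos (m * π / 2) ^ 2 - 1 = (-1) ^ m := by
    rw [← cos_two_mul, mul_div_cancel₀ _ two_ne_zero, cos_nat_mul_pi]
  have hpyth := sin_sq_add_cos_sq (m * π / 2)
  apply mul_left_cancel₀ hsin
  linear_combination hdirichlet + cos (a / 2) / 2 * hsc - sin (a / 2) / 2 * hcc + sin (a / 2) * hpyth

theorem Polynomial.eq_of_natDegree_le_of_eval_eq {R : Type*} [CommRing R] [IsDomain R] {n : ℕ}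
    {v : Fin (n + 1) → R} (hv : Function.Injective v) {p q : R[X]} (hp : p.natDegree ≤ n)
    (hq : q.natDegree ≤ n) (h : ∀ i, p.eval (v i) = q.eval (v i)) : p = q := by
  have hlt {r : R[X]} (hr : r.natDegree ≤ n) : r.degree < #(univ : Finset (Fin (n + 1))) := by
    rw [card_univ, Fintype.card_fin]
    exact (degree_le_of_natDegree_le hr).trans_lt (by exact_mod_cast n.lt_succ_self)
  exact eq_of_degrees_lt_of_eval_index_eq _ hv.injOn (hlt hp) (hlt hq) fun i _ ↦ h i

noncomputable def chebyshevAngle (N j : ℕ) : ℝ := (2 * (j : ℝ) + 1) * π / (2 * (N : ℝ) + 2)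

theorem chebyshevAngle_add (N i j : ℕ) :
    chebyshevAngle N i + chebyshevAngle N j = (i + j + 1 : ℕ) * π / (N + 1) := by
  unfold chebyshevAngle; push_cast; field_simp; ring

theorem chebyshevAngle_sub {N i j : ℕ} (hij : i ≤ j) :
    chebyshevAngle N j - chebyshevAngle N i = (j - i : ℕ) * π / (N + 1) := by
  unfold chebyshevAngle; push_cast [Nat.cast_sub hij]; field_simp; ring

theorem one_add_two_mul_sum_cos_mul_cos_chebyshevAngle {N i j : ℕ} (hi : i ≤ N) (hj : j ≤ N) :
    1 + 2 * ∑ k ∈ Icc 1 N, cos (k * chebyshevAngle N i) * cos (k * chebyshevAngle N j) =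
      if i = j then (N + 1 : ℝ) else 0 := by
  wlog hij : i ≤ j generalizing i j
  · have := this hj hi (by omega)
    simp_rw [mul_comm (cos (_ * chebyshevAngle N j)), @eq_comm _ j] at this
    exact this
  have hprod : ∀ k : ℕ, 2 * (cos (k * chebyshevAngle N i) * cos (k * chebyshevAngle N j)) =
      cos (k * ((j - i : ℕ) * π / (N + 1))) + cos (k * ((i + j + 1 : ℕ) * π / (N + 1))) := by
    intro k
    rw [← mul_assoc, two_mul_cos_mul_cos, ← chebyshevAngle_add, ← chebyshevAngle_sub hij,
      mul_sub, mul_add, ← cos_neg, neg_sub]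
  simp only [mul_sum, hprod, sum_add_distrib]
  rw [sum_Icc_cos_mul_pi_div (m := i + j + 1) (by omega) (by omega)]
  rcases hij.eq_or_lt with rfl | hlt
  · have hodd : Odd (i + i + 1) := ⟨i, by ring⟩
    simp [hodd.neg_one_pow, add_comm]
  · rw [sum_Icc_cos_mul_pi_div (by omega) (by omega), if_neg hlt.ne]
    rcases Nat.even_or_odd (j - i) with h | h
    · have h' : Odd (i + j + 1) := by rcases h with ⟨r, hr⟩; exact ⟨i + r, by omega⟩
      rw [h.neg_one_pow, h'.neg_one_pow]; ring
    · have h' : Even (i + j + 1) := by rcases h with ⟨r, hr⟩; exact ⟨i + r + 1, by omega⟩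
      rw [h.neg_one_pow, h'.neg_one_pow]; ring

theorem chebyshevAngle_mem_Icc {N j : ℕ} (hj : j ≤ N) : chebyshevAngle N j ∈ Set.Icc 0 π := by
  have hj' : (j : ℝ) ≤ N := by exact_mod_cast hj
  refine ⟨by unfold chebyshevAngle; positivity, ?_⟩
  rw [chebyshevAngle, div_le_iff₀ (by positivity)]
  nlinarith [pi_pos]

theorem injective_neg_cos_chebyshevAngle (N : ℕ) :
    Function.Injective fun i : Fin (N + 1) ↦ -cos (chebyshevAngle N i) := by
  intro i j hij
  have hangle := injOn_cos (chebyshevAngle_mem_Icc i.is_le) (chebyshevAngle_mem_Icc j.is_le)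
    (neg_inj.mp hij)
  unfold chebyshevAngle at hangle
  field_simp at hangle
  exact Fin.ext (by exact_mod_cast (by linarith : ((i : ℕ) : ℝ) = j))

theorem T_eval_neg_cos_chebyshevAngle_self {N j : ℕ} (hj : j ≤ N) :
    (T ℝ N).eval (-cos (chebyshevAngle N j)) = (-1) ^ (N - j) * sin (chebyshevAngle N j) := by
  have hangle : (N : ℝ) * (π - chebyshevAngle N j) =
      (N - j : ℕ) * π - (π / 2 - chebyshevAngle N j) := by
    unfold chebyshevAngle; push_cast [Nat.cast_sub hj]; field_simp; ring
  rw [← cos_pi_sub, T_real_cos, Int.cast_natCast, hangle, cos_nat_mul_pi_sub, cos_pi_div_two_sub]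

theorem T_eval_neg_cos_mul_T_eval_neg_cos (n : ℤ) (α β : ℝ) :
    (T ℝ n).eval (-cos α) * (T ℝ n).eval (-cos β) = cos (n * α) * cos (n * β) := by
  rw [T_eval_neg_mul_T_eval_neg, T_real_cos, T_real_cos]

noncomputable def chebyshevKernel (N : ℕ) (y : ℝ) : ℝ[X] :=
  C ((N : ℝ) + 1)⁻¹ * (1 + 2 * ∑ k ∈ Icc 1 N, C ((T ℝ k).eval y) * T ℝ k)

theorem eval_chebyshevKernel (N : ℕ) (y x : ℝ) :
    (chebyshevKernel N y).eval x =
      ((N : ℝ) + 1)⁻¹ * (1 + 2 * ∑ k ∈ Icc 1 N, (T ℝ k).eval y * (T ℝ k).eval x) := by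
  simp [chebyshevKernel, eval_finsetSum]

theorem natDegree_chebyshevKernel_le (N : ℕ) (y : ℝ) : (chebyshevKernel N y).natDegree ≤ N := by
  unfold chebyshevKernel
  refine natDegree_C_mul_le _ _ |>.trans <| natDegree_add_le_of_degree_le (by simp) ?_
  refine natDegree_mul_le.trans ?_
  rw [natDegree_ofNat, zero_add]
  refine natDegree_sum_le_of_forall_le _ _ fun k hk ↦ (natDegree_C_mul_le _ _).trans ?_
  simpa using (mem_Icc.mp hk).2

theorem eval_chebyshevKernel_neg_cos_chebyshevAngle {N i j : ℕ} (hi : i ≤ N) (hj : j ≤ N) :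
    (chebyshevKernel N (-cos (chebyshevAngle N j))).eval (-cos (chebyshevAngle N i)) =
      if i = j then 1 else 0 := by
  simp_rw [eval_chebyshevKernel, T_eval_neg_cos_mul_T_eval_neg_cos, Int.cast_natCast,
    mul_comm (cos (_ * chebyshevAngle N j)), one_add_two_mul_sum_cos_mul_cos_chebyshevAngle hi hj]
  split_ifs <;> simp [Nat.cast_add_one_ne_zero]

/-- Chebyshev expansion of the Lagrange basis polynomials associated
with the Chebyshev points of the first kind. -/
theorem stmt_14 (N : ℕ) (hN : 1 ≤ N) (ν : Fin (N + 1) → ℝ)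
    (hν : ∀ j, ν j = -Real.cos ((2 * (j : ℝ) + 1) * π / (2 * (N : ℝ) + 2)))
    (ℓ : Fin (N + 1) → Polynomial ℝ)
    (hdeg : ∀ j, (ℓ j).natDegree ≤ N)
    (hval : ∀ i j, (ℓ j).eval (ν i) = if i = j then 1 else 0)
    (j : Fin (N + 1)) (x : ℝ) :
    (ℓ j).eval x =
      (1 / ((N : ℝ) + 1)) * (Polynomial.Chebyshev.T ℝ 0).eval x +
        (∑ k ∈ Finset.Icc 1 (N - 1),
          (2 * (Polynomial.Chebyshev.T ℝ (k : ℤ)).eval (ν j) / ((N : ℝ) + 1)) *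
            (Polynomial.Chebyshev.T ℝ (k : ℤ)).eval x) +
        (-1 : ℝ) ^ (N - (j : ℕ)) * (2 / ((N : ℝ) + 1)) *
          Real.sin ((2 * (j : ℝ) + 1) * π / (2 * (N : ℝ) + 2)) *
          (Polynomial.Chebyshev.T ℝ (N : ℤ)).eval x := by
  have hνθ (i : Fin (N + 1)) : ν i = -cos (chebyshevAngle N i) := hν i
  have hℓ : ℓ j = chebyshevKernel N (ν j) := by
    refine eq_of_natDegree_le_of_eval_eq (funext hνθ ▸ injective_neg_cos_chebyshevAngle N)
      (hdeg j) (natDegree_chebyshevKernel_le N _) fun i ↦ ?_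
    rw [hval, hνθ i, hνθ j, eval_chebyshevKernel_neg_cos_chebyshevAngle i.is_le j.is_le]
    simp [Fin.val_inj]
  have hTN : (T ℝ N).eval (ν j) = (-1) ^ (N - j) * sin ((2 * (j : ℝ) + 1) * π / (2 * N + 2)) := by
    rw [hνθ j]
    exact T_eval_neg_cos_chebyshevAngle_self j.is_le
  obtain ⟨M, rfl⟩ : ∃ M, N = M + 1 := ⟨N - 1, by omega⟩
  have hsum : ∑ k ∈ Icc 1 M, 2 * (T ℝ k).eval (ν j) / ((M + 1 : ℕ) + 1 : ℝ) * (T ℝ k).eval x =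
      ((M + 1 : ℕ) + 1 : ℝ)⁻¹ * (2 * ∑ k ∈ Icc 1 M, (T ℝ k).eval (ν j) * (T ℝ k).eval x) := by
    rw [mul_sum, mul_sum]
    exact sum_congr rfl fun k _ ↦ by ring
  rw [hℓ, eval_chebyshevKernel, sum_Icc_succ_top (by omega), Nat.add_sub_cancel, hTN, hsum,
    T_zero, eval_one]
  ring
end

section
/- Let -1 ≤ y_0 < y_1 < ... < y_M ≤ 1 be distinct real points with Lagrange basis polynomials ℓ_{j,M}, let a, b ∈ ℝ with a ≠ b, and let c_0, ..., c_{M+2} ∈ ℝ. For j = 0, ..., M define B_j(x) = ∂_x^{-2}ℓ_{j,M}(x) - (bx/(b-a))·∫_{-1}^{1} ∂_t^{-1}ℓ_{j,M}(t) dt + ((a+b)x/(2(b-a)) - 1/2)·∫_{-1}^{1} ∂_t^{-2}ℓ_{j,M}(t) dt, and define B_{M+1}(x) = x/(b-a) and B_{M+2}(x) = 1/2 - (a+b)x/(2(b-a)). Then p(x) = Σ_{j=0}^{M+2} c_j·B_j(x) is a polynomial of degree at most M+2 satisfying p''(y_j) = c_j for j = 0, ..., M, a·p(-1) + b·p(1)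 = c_{M+1}, and ∫_{-1}^{1} p(x) dx = c_{M+2}. -/
/-!
The linear polynomials `B_{M+1} = x/(b-a)` and `B_{M+2} = 1/2 - (a+b)x/(2(b-a))` (`dualBoundary`,
`dualIntegral`) have zero second derivative and are dual to the functionals `(𝓛₁, 𝓛₂)`, i.e.
`𝓛ᵢ B_{M+k} = δᵢₖ`. Hence for any polynomial `r`, subtracting `𝓛₁ r · B_{M+1} + 𝓛₂ r · B_{M+2}`
kills both functionals without changing `r''`. Applied to the polynomial primitive `r = ∂⁻²ℓⱼ`,
for which `𝓛₁ r = b·r(1)` since `r(-1) = 0`, this produces exactly `B_j`; so `B_j'' = ℓⱼ` and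
`𝓛₁ B_j = 𝓛₂ B_j = 0`, and all conditions on `p = Σ cⱼ Bⱼ` follow by linearity.
-/

open Polynomial

namespace Polynomial

variable {K : Type*} [Field K]

noncomputable def antideriv : K[X] →ₗ[K] K[X] :=
  lsum fun n => ((n + 1 : K)⁻¹) • monomial (n + 1)

@[simp]
lemma derivative_antideriv [CharZero K] (p : K[X]) : derivative (antideriv p) = p := by
  induction p using Polynomial.induction_on' with
  | add p q hp hq => rw [map_add, derivative_add, hp, hq]
  | monomial n a =>
    have hn : (n + 1 : K) ≠ 0 := Nat.cast_add_one_ne_zero n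
    simp [antideriv, sum_monomial_index, smul_monomial, mul_right_comm _ a, hn]

lemma natDegree_le_natDegree_derivative_add_one [CharZero K] (p : K[X]) :
    p.natDegree ≤ p.derivative.natDegree + 1 := by
  rw [natDegree_derivative]; omega

noncomputable def primitiveFrom (u : K) : K[X] →ₗ[K] K[X] :=
  antideriv - monomial 0 ∘ₗ leval u ∘ₗ antideriv

lemma primitiveFrom_apply (u : K) (p : K[X]) :
    primitiveFrom u p = antideriv p - C ((antideriv p).eval u) := by
  simp [primitiveFrom, leval]

@[simp]
lemma derivative_primitiveFrom [CharZero K] (u : K) (p : K[X]) :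
    derivative (primitiveFrom u p) = p := by
  simp [primitiveFrom_apply]

@[simp]
lemma eval_primitiveFrom_self (u : K) (p : K[X]) : (primitiveFrom u p).eval u = 0 := by
  simp [primitiveFrom_apply]

lemma natDegree_primitiveFrom_le [CharZero K] (u : K) (p : K[X]) :
    (primitiveFrom u p).natDegree ≤ p.natDegree + 1 := by
  simpa using natDegree_le_natDegree_derivative_add_one (primitiveFrom u p)

lemma eval_primitiveFrom_eq_integral (u x : ℝ) (p : ℝ[X]) :
    (primitiveFrom u p).eval x = ∫ t in u..x, p.eval t := by
  rw [intervalIntegral.integral_eq_sub_of_hasDerivAt (f := fun t => (primitiveFrom u p).eval t)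
    (fun t _ => by simpa using (primitiveFrom u p).hasDerivAt t)
    (p.continuous.intervalIntegrable _ _)]
  simp

noncomputable def integralForm (u v : ℝ) : ℝ[X] →ₗ[ℝ] ℝ :=
  leval v ∘ₗ primitiveFrom u

lemma integralForm_apply (u v : ℝ) (p : ℝ[X]) :
    integralForm u v p = ∫ x in u..v, p.eval x := by
  simp [integralForm, leval, eval_primitiveFrom_eq_integral]

lemma integralForm_C (u v k : ℝ) : integralForm u v (C k) = (v - u) * k := by
  simp [integralForm_apply]

lemma integralForm_X (u v : ℝ) : integralForm u v X = (v ^ 2 - u ^ 2) / 2 := by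
  simp [integralForm_apply]

end Polynomial

namespace BirkhoffInterpolation

variable (a b : ℝ)

noncomputable def boundaryForm : ℝ[X] →ₗ[ℝ] ℝ := a • leval (-1) + b • leval 1

lemma boundaryForm_apply (p : ℝ[X]) :
    boundaryForm a b p = a * p.eval (-1) + b * p.eval 1 := rfl

noncomputable def dualBoundary : ℝ[X] := C (b - a)⁻¹ * X

noncomputable def dualIntegral : ℝ[X] := C (1 / 2) - C ((a + b) / (2 * (b - a))) * X

lemma eval_dualBoundary (x : ℝ) : (dualBoundary a b).eval x = x / (b - a) := by
  simp [dualBoundary, div_eq_inv_mul]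

lemma eval_dualIntegral (x : ℝ) :
    (dualIntegral a b).eval x = 1 / 2 - (a + b) * x / (2 * (b - a)) := by
  simp [dualIntegral, mul_div_right_comm]

variable {a b}

lemma boundaryForm_dualBoundary (hab : a ≠ b) : boundaryForm a b (dualBoundary a b) = 1 := by
  have : b - a ≠ 0 := sub_ne_zero.mpr hab.symm
  simp only [boundaryForm_apply, eval_dualBoundary]
  field_simp
  ring

lemma boundaryForm_dualIntegral (hab : a ≠ b) : boundaryForm a b (dualIntegral a b) = 0 := by
  have : b - a ≠ 0 := sub_ne_zero.mpr hab.symm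
  simp only [boundaryForm_apply, eval_dualIntegral]
  field_simp
  ring

lemma integralForm_dualBoundary : integralForm (-1) 1 (dualBoundary a b) = 0 := by
  simp [dualBoundary, C_mul', integralForm_X]

lemma integralForm_dualIntegral : integralForm (-1) 1 (dualIntegral a b) = 1 := by
  norm_num [dualIntegral, C_mul', integralForm_C, integralForm_X]

lemma derivative_derivative_dualBoundary : derivative (derivative (dualBoundary a b)) = 0 := by
  simp [dualBoundary]

lemma derivative_derivative_dualIntegral : derivative (derivative (dualIntegral a b)) = 0 := by
  simp [dualIntegral]

lemma natDegree_dualBoundary_le : (dualBoundary a b).natDegree ≤ 1 :=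
  (natDegree_C_mul_le _ _).trans natDegree_X_le

lemma natDegree_dualIntegral_le : (dualIntegral a b).natDegree ≤ 1 :=
  natDegree_sub_le_of_le (natDegree_C _).le ((natDegree_C_mul_le _ _).trans natDegree_X_le)

variable (a b) in
noncomputable def correction (r : ℝ[X]) : ℝ[X] :=
  r - boundaryForm a b r • dualBoundary a b - integralForm (-1) 1 r • dualIntegral a b

lemma boundaryForm_correction (hab : a ≠ b) (r : ℝ[X]) :
    boundaryForm a b (correction a b r) = 0 := by
  simp [correction, boundaryForm_dualBoundary hab, boundaryForm_dualIntegral hab]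

lemma integralForm_correction (r : ℝ[X]) : integralForm (-1) 1 (correction a b r) = 0 := by
  simp [correction, integralForm_dualBoundary, integralForm_dualIntegral]

lemma derivative_derivative_correction (r : ℝ[X]) :
    derivative (derivative (correction a b r)) = derivative (derivative r) := by
  simp [correction, derivative_derivative_dualBoundary, derivative_derivative_dualIntegral]

lemma natDegree_correction_le {r : ℝ[X]} {n : ℕ} (hn : 1 ≤ n) (hr : r.natDegree ≤ n) :
    (correction a b r).natDegree ≤ n := by
  refine (natDegree_sub_le _ _).trans (max_le ((natDegree_sub_le _ _).trans (max_le hr ?_)) ?_)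
  · exact (natDegree_smul_le _ _).trans (natDegree_dualBoundary_le.trans hn)
  · exact (natDegree_smul_le _ _).trans (natDegree_dualIntegral_le.trans hn)

variable (a b) in
noncomputable def basis (p : ℝ[X]) : ℝ[X] :=
  correction a b (primitiveFrom (-1) (primitiveFrom (-1) p))

lemma eval_basis (p : ℝ[X]) (x : ℝ) : (basis a b p).eval x =
    (∫ t in (-1 : ℝ)..x, ∫ s in (-1 : ℝ)..t, p.eval s) -
      (b * x / (b - a)) * (∫ t in (-1 : ℝ)..1, ∫ s in (-1 : ℝ)..t, p.eval s) +
      ((a + b) * x / (2 * (b - a)) - 1 / 2) *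
        (∫ t in (-1 : ℝ)..1, ∫ s in (-1 : ℝ)..t, ∫ r in (-1 : ℝ)..s, p.eval r) := by
  simp only [basis, correction, eval_sub, eval_smul, smul_eq_mul, boundaryForm_apply,
    eval_primitiveFrom_self, integralForm_apply, eval_dualBoundary, eval_dualIntegral,
    eval_primitiveFrom_eq_integral]
  ring

lemma boundaryForm_basis (hab : a ≠ b) (p : ℝ[X]) : boundaryForm a b (basis a b p) = 0 :=
  boundaryForm_correction hab _

lemma integralForm_basis (p : ℝ[X]) : integralForm (-1) 1 (basis a b p) = 0 :=
  integralForm_correction _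

lemma derivative_derivative_basis (p : ℝ[X]) : derivative (derivative (basis a b p)) = p := by
  simp [basis, derivative_derivative_correction]

lemma natDegree_basis_le (p : ℝ[X]) : (basis a b p).natDegree ≤ p.natDegree + 2 :=
  natDegree_correction_le (by omega) <| (natDegree_primitiveFrom_le _ _).trans <|
    Nat.succ_le_succ (natDegree_primitiveFrom_le _ _)

end BirkhoffInterpolation

open BirkhoffInterpolation

theorem stmt_18_general (M : ℕ) (y : Fin (M + 1) → ℝ)
    (ℓ : Fin (M + 1) → Polynomial ℝ)
    (hdeg : ∀ j, (ℓ j).natDegree ≤ M)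
    (hval : ∀ i j, (ℓ j).eval (y i) = if i = j then 1 else 0)
    (a b : ℝ) (hab : a ≠ b)
    (c : Fin (M + 1) → ℝ) (cM1 cM2 : ℝ)
    (B : Fin (M + 1) → ℝ → ℝ)
    (hB : ∀ j x, B j x =
      (∫ t in (-1 : ℝ)..x, ∫ s in (-1 : ℝ)..t, (ℓ j).eval s) -
        (b * x / (b - a)) *
          (∫ t in (-1 : ℝ)..1, ∫ s in (-1 : ℝ)..t, (ℓ j).eval s) +
        ((a + b) * x / (2 * (b - a)) - 1 / 2) *
          (∫ t in (-1 : ℝ)..1, ∫ s in (-1 : ℝ)..t, ∫ r in (-1 : ℝ)..s, (ℓ j).eval r)) :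
    ∃ q : Polynomial ℝ,
      (∀ x : ℝ, q.eval x =
        (∑ j : Fin (M + 1), c j * B j x) +
          cM1 * (x / (b - a)) +
          cM2 * (1 / 2 - (a + b) * x / (2 * (b - a)))) ∧
      q.natDegree ≤ M + 2 ∧
      (∀ j, (Polynomial.derivative (Polynomial.derivative q)).eval (y j) = c j) ∧
      (a * q.eval (-1) + b * q.eval 1 = cM1) ∧
      ((∫ x in (-1 : ℝ)..1, q.eval x) = cM2) := by
  refine ⟨∑ j, c j • basis a b (ℓ j) + cM1 • dualBoundary a b + cM2 • dualIntegral a b,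
    fun x => ?_, ?_, fun i => ?_, ?_, ?_⟩
  · simp only [eval_add, eval_finsetSum, eval_smul, smul_eq_mul, eval_basis, hB,
      eval_dualBoundary, eval_dualIntegral]
  · refine natDegree_add_le_of_degree_le (natDegree_add_le_of_degree_le
      (natDegree_sum_le_of_forall_le _ _ fun j _ => ?_) ?_) ?_
    · exact (natDegree_smul_le _ _).trans
        ((natDegree_basis_le _).trans (Nat.add_le_add_right (hdeg j) 2))
    · exact (natDegree_smul_le _ _).trans (natDegree_dualBoundary_le.trans (by omega))
    · exact (natDegree_smul_le _ _).trans (natDegree_dualIntegral_le.trans (by omega))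
  · simp [derivative_derivative_basis, derivative_derivative_dualBoundary,
      derivative_derivative_dualIntegral, eval_finsetSum, hval]
  · rw [← boundaryForm_apply]
    simp [boundaryForm_basis hab, boundaryForm_dualBoundary hab, boundaryForm_dualIntegral hab]
  · rw [← integralForm_apply]
    simp [integralForm_basis, integralForm_dualBoundary, integralForm_dualIntegral]

/-- the function `p = Σ c_j B_j` built from the second-order
Birkhoff-type basis polynomials is a polynomial of degree at most `M+2`
solving the second-order Birkhoff-type interpolation problem with constraints
`a·p(-1) + b·p(1) = c_{M+1}` and `∫_{-1}^1 p = c_{M+2}`. -/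
theorem stmt_18 (M : ℕ) (y : Fin (M + 1) → ℝ)
    (hy : StrictMono y) (hy0 : -1 ≤ y 0) (hyM : y (Fin.last M) ≤ 1)
    (ℓ : Fin (M + 1) → Polynomial ℝ)
    (hdeg : ∀ j, (ℓ j).natDegree ≤ M)
    (hval : ∀ i j, (ℓ j).eval (y i) = if i = j then 1 else 0)
    (a b : ℝ) (hab : a ≠ b)
    (c : Fin (M + 1) → ℝ) (cM1 cM2 : ℝ)
    (B : Fin (M + 1) → ℝ → ℝ)
    (hB : ∀ j x, B j x =
      (∫ t in (-1 : ℝ)..x, ∫ s in (-1 : ℝ)..t, (ℓ j).eval s) -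
        (b * x / (b - a)) *
          (∫ t in (-1 : ℝ)..1, ∫ s in (-1 : ℝ)..t, (ℓ j).eval s) +
        ((a + b) * x / (2 * (b - a)) - 1 / 2) *
          (∫ t in (-1 : ℝ)..1, ∫ s in (-1 : ℝ)..t, ∫ r in (-1 : ℝ)..s, (ℓ j).eval r)) :
    ∃ q : Polynomial ℝ,
      (∀ x : ℝ, q.eval x =
        (∑ j : Fin (M + 1), c j * B j x) +
          cM1 * (x / (b - a)) +
          cM2 * (1 / 2 - (a + b) * x / (2 * (b - a)))) ∧
      q.natDegree ≤ M + 2 ∧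
      (∀ j, (Polynomial.derivative (Polynomial.derivative q)).eval (y j) = c j) ∧
      (a * q.eval (-1) + b * q.eval 1 = cM1) ∧
      ((∫ x in (-1 : ℝ)..1, q.eval x) = cM2) :=
  stmt_18_general M y ℓ hdeg hval a b hab c cM1 cM2 B hB
end
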